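/- Let R₀, R₁, R₂, R₃ ≥ 1/2 be real numbers. The number of positive integers q admitting a decomposition q = b₁ b₂² c² d (with b₁ squarefree product of primes exactly dividing q, b₂ product of primes with square exact multiplicity, d squarefree, d | c) such that R₀ < b₁ ≤ 2R₀, R₁ < b₂ ≤ 2R₁, R₂ < c ≤ 2R₂, R₃ < d ≤ 2R₃ is O(R₀ R₁ R₂^{1/2} R₃^{1/2}), where the implied constant is absolute. -/

import Mathlib

/-!
The quadruple `(b₁, b₂, c, d)` determines `q`, so it suffices to count quadruples. Reading off
exponents in `q = b₁ b₂² c² d` shows that every prime of `c` not dividing `d` divides `c` at least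
twice; hence `c = d d₀ s` with `d₀ ∣ d` and `s` powerful. A powerful `s ≤ X` has the form `a² b³`,
so there are at most `∑_b √(X / b³) ≤ 3 √X` of them. Writing `d = d₀ m`, the number of pairs
`(c, d)` is then at most `∑_{d₀, m} 3 √(2R₂) / (d₀ √m) ≤ 6 √(2R₂) ∑_{d₀} √(2R₃) / d₀^{3/2}`,
which is `O(√(R₂ R₃))`.
-/

/-- The product of primes dividing `q` with exact multiplicity 1. -/
def partB1 (q : ℕ) : ℕ :=
  ∏ p ∈ q.primeFactors.filter (fun p => q.factorization p = 1), p

/-- The product of primes dividing `q` with exact multiplicity 2. -/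
def partB2 (q : ℕ) : ℕ :=
  ∏ p ∈ q.primeFactors.filter (fun p => q.factorization p = 2), p

/-- The product of primes `p` with `p^e ∥ q` for some odd `e ≥ 3`. -/
def partD (q : ℕ) : ℕ :=
  ∏ p ∈ q.primeFactors.filter
    (fun p => 3 ≤ q.factorization p ∧ Odd (q.factorization p)), p

open Finset

namespace Nat

def Powerful (n : ℕ) : Prop :=
  ∀ p : ℕ, p.Prime → p ∣ n → p ^ 2 ∣ n

theorem Powerful.exists_eq_sq_mul_cube {n : ℕ} (hn : n.Powerful) :
    ∃ a b : ℕ, n = a ^ 2 * b ^ 3 := by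
  obtain ⟨r, t, rfl, hr⟩ := sq_mul_squarefree n
  -- every prime `p ∣ r` has `p ^ 2 ∣ t ^ 2 * r` with `r` squarefree, so `p ∣ t`; hence `r ∣ t`
  have hrt : r ∣ t := by
    rw [← prod_primeFactors_of_squarefree hr]
    refine Finset.prod_primes_dvd t (fun p hp => (prime_of_mem_primeFactors hp).prime)
      fun p hp => ?_
    have hp' := prime_of_mem_primeFactors hp
    by_contra hpt
    have hcop : (p ^ 2).Coprime (t ^ 2) := Coprime.pow 2 2 (hp'.coprime_iff_not_dvd.2 hpt)
    have hp2 : p * p ∣ r := by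
      rw [← sq]; exact hcop.dvd_of_dvd_mul_left (hn p hp' (dvd_mul_of_dvd_right
        (dvd_of_mem_primeFactors hp) _))
    exact hp'.one_lt.ne' (Nat.isUnit_iff.1 (hr p hp2))
  obtain ⟨u, rfl⟩ := hrt
  exact ⟨u, r, by ring⟩

end Nat

theorem factorization_prod_primeFactors_filter (q : ℕ) {P : ℕ → Prop} [DecidablePred P]
    (hP : ¬ P 0) (p : ℕ) :
    (∏ r ∈ q.primeFactors.filter (fun r => P (q.factorization r)), r).factorization p =
      if P (q.factorization p) then 1 else 0 := by
  have hprime : ∀ r ∈ q.primeFactors.filter (fun r => P (q.factorization r)), r.Prime :=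
    fun r hr => Nat.prime_of_mem_primeFactors (mem_filter.1 hr).1
  rw [Nat.factorization_prod fun r hr => (hprime r hr).ne_zero, Finsupp.finsetSum_apply,
    Finset.sum_congr rfl fun r hr => by rw [(hprime r hr).factorization, Finsupp.single_apply],
    Finset.sum_ite_eq']
  refine if_congr ?_ rfl rfl
  rw [mem_filter, ← Nat.support_factorization, Finsupp.mem_support_iff]
  exact ⟨And.right, fun h => ⟨fun h0 => hP (h0 ▸ h), h⟩⟩

theorem factorization_partB1 (q p : ℕ) :
    (partB1 q).factorization p = if q.factorization p = 1 then 1 else 0 :=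
  factorization_prod_primeFactors_filter q (P := (· = 1)) one_ne_zero.symm p

theorem factorization_partB2 (q p : ℕ) :
    (partB2 q).factorization p = if q.factorization p = 2 then 1 else 0 :=
  factorization_prod_primeFactors_filter q (P := (· = 2)) two_ne_zero.symm p

theorem partB1_dvd (n : ℕ) : partB1 n ∣ n :=
  (Finset.prod_dvd_prod_of_subset _ _ _ (filter_subset _ _)).trans (Nat.prod_primeFactors_dvd n)

theorem powerful_div_partB1 (n : ℕ) : (n / partB1 n).Powerful := by
  rcases eq_or_ne n 0 with rfl | hn
  · intro p _ _; simp
  intro p hp hpn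
  have hne : n / partB1 n ≠ 0 := (Nat.div_ne_zero_iff_of_dvd (partB1_dvd n)).2
    ⟨hn, ne_zero_of_dvd_ne_zero hn (partB1_dvd n)⟩
  rw [hp.pow_dvd_iff_le_factorization hne]
  rw [hp.dvd_iff_one_le_factorization hne] at hpn
  rw [Nat.factorization_div (partB1_dvd n), Finsupp.tsub_apply, factorization_partB1] at hpn ⊢
  split_ifs at hpn ⊢ <;> omega

theorem sq_dvd_of_eq_partB1_mul {q c p : ℕ} (hq0 : q ≠ 0)
    (hq : q = partB1 q * partB2 q ^ 2 * c ^ 2 * partD q) (hp : p.Prime) (hpc : p ∣ c)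
    (hpd : ¬ p ∣ partD q) : p ^ 2 ∣ c := by
  have hne := hq0
  rw [hq] at hne
  obtain ⟨⟨⟨hb₁, hb₂⟩, hc⟩, hd⟩ := by simpa [not_or] using hne
  -- `v_p q = [v_p q = 1] + 2 [v_p q = 2] + 2 v_p c`, which rules out `v_p c = 1`
  have hv := congrArg (·.factorization p) hq
  rw [Nat.factorization_mul (by positivity) hd, Nat.factorization_mul (by positivity) (by positivity),
    Nat.factorization_mul hb₁ (by positivity), Nat.factorization_pow, Nat.factorization_pow] at hv
  simp only [Finsupp.add_apply, Finsupp.smul_apply, smul_eq_mul] at hv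
  rw [factorization_partB1, factorization_partB2,
    Nat.factorization_eq_zero_of_not_dvd hpd] at hv
  rw [hp.dvd_iff_one_le_factorization hc] at hpc
  rw [hp.pow_dvd_iff_le_factorization hc]
  split_ifs at hv <;> omega

theorem exists_eq_mul_mul_powerful {c d : ℕ} (hdc : d ∣ c)
    (h : ∀ p : ℕ, p.Prime → p ∣ c → ¬ p ∣ d → p ^ 2 ∣ c) :
    ∃ u s : ℕ, u ∣ d ∧ s.Powerful ∧ c = d * u * s := by
  obtain ⟨k, rfl⟩ := hdc
  refine ⟨partB1 k, k / partB1 k, ?_, powerful_div_partB1 k, by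
    rw [mul_assoc, Nat.mul_div_cancel' (partB1_dvd k)]⟩
  refine Finset.prod_primes_dvd d (fun p hp => (Nat.prime_of_mem_primeFactors
    (mem_filter.1 hp).1).prime) fun p hp => ?_
  obtain ⟨hpk, hk1⟩ := mem_filter.1 hp
  obtain ⟨hp', hpk, hk0⟩ := Nat.mem_primeFactors.1 hpk
  by_contra hpd
  have hp2 : p ^ 2 ∣ k :=
    (Nat.Coprime.pow_left 2 ((Nat.Prime.coprime_iff_not_dvd hp').2 hpd)).dvd_of_dvd_mul_left
      (h p hp' (dvd_mul_of_dvd_right hpk d) hpd)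
  rw [hp'.pow_dvd_iff_le_factorization hk0] at hp2
  omega

theorem sqrt_natCast_div_le (X k : ℕ) : √((X / k : ℕ) : ℝ) ≤ √X / √k := by
  rw [← Real.sqrt_div' _ k.cast_nonneg]
  exact Real.sqrt_le_sqrt Nat.cast_div_le

theorem sum_Icc_one_div_sqrt_le (N : ℕ) : ∑ m ∈ Icc 1 N, 1 / √m ≤ 2 * √N := by
  induction N with
  | zero => simp
  | succ n ih =>
    rw [sum_Icc_succ_top (by omega)]
    set x := √(n : ℝ)
    set y := √((n + 1 : ℕ) : ℝ)
    have hx : x ^ 2 = n := Real.sq_sqrt n.cast_nonneg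
    have hy : y ^ 2 = n + 1 := by simp [y, Real.sq_sqrt (by positivity : (0 : ℝ) ≤ n + 1)]
    have hy0 : 0 < y := Real.sqrt_pos.2 (by positivity)
    -- telescoping: `1 / √(n + 1) ≤ 2 (√(n + 1) - √n)`
    have step : 1 / y ≤ 2 * y - 2 * x := by
      rw [div_le_iff₀ hy0]
      nlinarith [sq_nonneg (y - x)]
    linarith

theorem sum_Icc_one_div_mul_sqrt_le (N : ℕ) : ∑ m ∈ Icc 1 N, 1 / (m * √m) ≤ 3 := by
  -- telescoping: `1 / (n √n) ≤ 2 / √(n - 1) - 2 / √n` for `n ≥ 2`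
  suffices h : ∀ n : ℕ, ∑ m ∈ Icc 1 (n + 1), 1 / (m * √m) ≤ 3 - 2 / √((n + 1 : ℕ) : ℝ) by
    rcases N with _ | n
    · simp
    · linarith [h n, show 0 ≤ 2 / √((n + 1 : ℕ) : ℝ) by positivity]
  intro n
  induction n with
  | zero => norm_num
  | succ n ih =>
    rw [sum_Icc_succ_top (by omega)]
    set x := √((n + 1 : ℕ) : ℝ)
    set y := √((n + 1 + 1 : ℕ) : ℝ)
    have hx : x ^ 2 = n + 1 := by simp [x, Real.sq_sqrt (by positivity : (0 : ℝ) ≤ n + 1)]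
    have hy : y ^ 2 = n + 2 := by
      simp [y, Real.sq_sqrt (by positivity : (0 : ℝ) ≤ n + 1 + 1)]; ring
    have hx1 : 1 ≤ x := by nlinarith [Real.sqrt_nonneg ((n + 1 : ℕ) : ℝ)]
    have hxy : x ≤ y := Real.sqrt_le_sqrt (by simp)
    have hy0 : 0 < y := by linarith
    have step : 1 / (((n + 1 + 1 : ℕ) : ℝ) * y) ≤ 2 / x - 2 / y := by
      rw [show ((n + 1 + 1 : ℕ) : ℝ) = y ^ 2 by rw [hy]; push_cast; ring,
        div_sub_div _ _ (by positivity) hy0.ne', div_le_div_iff₀ (by positivity) (by positivity)]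
      nlinarith [mul_pos (by linarith : (0 : ℝ) < x) hy0, sq_nonneg (y - x)]
    linarith

open Classical in
theorem card_filter_powerful_le (X : ℕ) : (#{n ∈ Icc 1 X | n.Powerful} : ℝ) ≤ 3 * √X := by
  have hsub : {n ∈ Icc 1 X | n.Powerful} ⊆
      (Icc 1 X).biUnion fun b => (Icc 1 (Nat.sqrt (X / b ^ 3))).image fun a => a ^ 2 * b ^ 3 := by
    intro n hn
    obtain ⟨⟨hn1, hnX⟩, hpow⟩ := by simpa only [mem_filter, mem_Icc] using hn
    obtain ⟨a, b, rfl⟩ := hpow.exists_eq_sq_mul_cube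
    have ha : 0 < a := by by_contra!; simp_all
    have hb : 0 < b := by by_contra!; simp_all
    simp only [mem_biUnion, mem_image, mem_Icc]
    refine ⟨b, ⟨hb, ?_⟩, a, ⟨ha, ?_⟩, rfl⟩
    · calc b ≤ b ^ 3 := Nat.le_self_pow (by norm_num) b
        _ ≤ a ^ 2 * b ^ 3 := Nat.le_mul_of_pos_left _ (by positivity)
        _ ≤ X := hnX
    · exact Nat.le_sqrt'.2 ((Nat.le_div_iff_mul_le (by positivity)).2 hnX)
  have hterm : ∀ b ∈ Icc 1 X, (Nat.sqrt (X / b ^ 3) : ℝ) ≤ √X * (1 / (b * √b)) := by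
    intro b hb
    have hb0 : (0 : ℝ) ≤ b := b.cast_nonneg
    calc (Nat.sqrt (X / b ^ 3) : ℝ) ≤ √((X / b ^ 3 : ℕ) : ℝ) := Real.nat_sqrt_le_real_sqrt
      _ ≤ √X / √((b ^ 3 : ℕ) : ℝ) := sqrt_natCast_div_le X _
      _ = √X * (1 / (b * √b)) := by
        rw [Nat.cast_pow, show (b : ℝ) ^ 3 = b ^ 2 * b by ring, Real.sqrt_mul (by positivity),
          Real.sqrt_sq hb0]
        ring
  calc (#{n ∈ Icc 1 X | n.Powerful} : ℝ)
      ≤ ∑ b ∈ Icc 1 X, (#(Icc 1 (Nat.sqrt (X / b ^ 3))) : ℝ) := by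
        exact_mod_cast (card_le_card hsub).trans (card_biUnion_le.trans
          (sum_le_sum fun b _ => card_image_le))
    _ = ∑ b ∈ Icc 1 X, (Nat.sqrt (X / b ^ 3) : ℝ) := by simp
    _ ≤ ∑ b ∈ Icc 1 X, √X * (1 / (b * √b)) := sum_le_sum hterm
    _ ≤ √X * 3 := by
        rw [← mul_sum]
        exact mul_le_mul_of_nonneg_left (sum_Icc_one_div_mul_sqrt_le X) (Real.sqrt_nonneg _)
    _ = 3 * √X := mul_comm _ _

open Classical in
noncomputable def admissiblePairs (X Y : ℕ) : Finset (ℕ × ℕ) :=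
  {cd ∈ Icc 1 X ×ˢ Icc 1 Y | cd.2 ∣ cd.1 ∧ ∀ p : ℕ, p.Prime → p ∣ cd.1 → ¬ p ∣ cd.2 → p ^ 2 ∣ cd.1}

open Classical in
theorem admissiblePairs_subset (X Y : ℕ) :
    admissiblePairs X Y ⊆ (Icc 1 Y).biUnion fun u => (Icc 1 (Y / u)).biUnion fun m =>
      {s ∈ Icc 1 (X / (u ^ 2 * m)) | s.Powerful}.image fun s => (u ^ 2 * m * s, u * m) := by
  rintro ⟨c, d⟩ hcd
  obtain ⟨⟨⟨hc1, hcX⟩, hd1, hdY⟩, hdc, hp⟩ := by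
    simpa only [admissiblePairs, mem_filter, mem_product, mem_Icc] using hcd
  obtain ⟨u, s, ⟨m, rfl⟩, hs, rfl⟩ := exists_eq_mul_mul_powerful hdc hp
  have hu : 0 < u := by by_contra!; simp_all
  have hm : 0 < m := by by_contra!; simp_all
  have hs0 : 0 < s := by by_contra!; simp_all
  simp only [mem_biUnion, mem_image, mem_filter, mem_Icc, Prod.mk.injEq]
  refine ⟨u, ⟨hu, le_trans (Nat.le_mul_of_pos_right u hm) hdY⟩, m,
    ⟨hm, (Nat.le_div_iff_mul_le hu).2 (by linarith)⟩, s,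
    ⟨⟨hs0, (Nat.le_div_iff_mul_le (by positivity)).2 (by linarith)⟩, hs⟩, by ring, rfl⟩

theorem card_admissiblePairs_le (X Y : ℕ) : (#(admissiblePairs X Y) : ℝ) ≤ 18 * √X * √Y := by
  classical
  have hterm : ∀ u ∈ Icc 1 Y, ∀ m ∈ Icc 1 (Y / u),
      (#{s ∈ Icc 1 (X / (u ^ 2 * m)) | s.Powerful} : ℝ) ≤ 3 * √X / u * (1 / √m) := by
    intro u _ m _
    calc (#{s ∈ Icc 1 (X / (u ^ 2 * m)) | s.Powerful} : ℝ)
        ≤ 3 * √((X / (u ^ 2 * m) : ℕ) : ℝ) := card_filter_powerful_le _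
      _ ≤ 3 * (√X / √((u ^ 2 * m : ℕ) : ℝ)) := by gcongr; exact sqrt_natCast_div_le _ _
      _ = 3 * √X / u * (1 / √m) := by
        rw [Nat.cast_mul, Nat.cast_pow, Real.sqrt_mul (by positivity), Real.sqrt_sq u.cast_nonneg]
        ring
  have hinner : ∀ u ∈ Icc 1 Y,
      ∑ m ∈ Icc 1 (Y / u), (#{s ∈ Icc 1 (X / (u ^ 2 * m)) | s.Powerful} : ℝ) ≤
        6 * √X * √Y * (1 / (u * √u)) := by
    intro u hu
    have hu0 : (0 : ℝ) < u := by exact_mod_cast (mem_Icc.1 hu).1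
    calc ∑ m ∈ Icc 1 (Y / u), (#{s ∈ Icc 1 (X / (u ^ 2 * m)) | s.Powerful} : ℝ)
        ≤ ∑ m ∈ Icc 1 (Y / u), 3 * √X / u * (1 / √m) := sum_le_sum (hterm u hu)
      _ ≤ 3 * √X / u * (2 * √((Y / u : ℕ) : ℝ)) := by
        rw [← mul_sum]; gcongr; exact sum_Icc_one_div_sqrt_le _
      _ ≤ 3 * √X / u * (2 * (√Y / √u)) := by gcongr; exact sqrt_natCast_div_le _ _
      _ = 6 * √X * √Y * (1 / (u * √u)) := by
        have : 0 < √(u : ℝ) := Real.sqrt_pos.2 hu0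
        field_simp
        ring
  calc (#(admissiblePairs X Y) : ℝ)
      ≤ ∑ u ∈ Icc 1 Y, ∑ m ∈ Icc 1 (Y / u),
          (#{s ∈ Icc 1 (X / (u ^ 2 * m)) | s.Powerful} : ℝ) := by
        exact_mod_cast (card_le_card (admissiblePairs_subset X Y)).trans (card_biUnion_le.trans
          (sum_le_sum fun u _ => card_biUnion_le.trans (sum_le_sum fun m _ => card_image_le)))
    _ ≤ ∑ u ∈ Icc 1 Y, 6 * √X * √Y * (1 / (u * √u)) := sum_le_sum hinner
    _ ≤ 6 * √X * √Y * 3 := by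
        rw [← mul_sum]; gcongr; exact sum_Icc_one_div_mul_sqrt_le Y
    _ = 18 * √X * √Y := by ring

theorem mem_Icc_one_floor {n : ℕ} {R S : ℝ} (hR : 0 ≤ R) (hlo : R < n) (hhi : n ≤ S) :
    n ∈ Icc 1 ⌊S⌋₊ :=
  mem_Icc.2 ⟨Nat.one_le_iff_ne_zero.2 (by rintro rfl; simp at hlo; linarith), Nat.le_floor hhi⟩

theorem card_Icc_one_floor_le {S : ℝ} (hS : 0 ≤ S) : (#(Icc 1 ⌊S⌋₊) : ℝ) ≤ S := by
  simpa using Nat.floor_le hS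

/-- The number of positive integers `q` whose decomposition `q = b₁ b₂² c² d`
lies in the dyadic boxes `R₀ < b₁ ≤ 2R₀`, `R₁ < b₂ ≤ 2R₁`, `R₂ < c ≤ 2R₂`,
`R₃ < d ≤ 2R₃` is `O(R₀ R₁ R₂^{1/2} R₃^{1/2})`, with an absolute implied constant. -/
theorem count_dyadic_decomposition :
    ∃ C : ℝ, 0 < C ∧ ∀ R₀ R₁ R₂ R₃ : ℝ,
      1/2 ≤ R₀ → 1/2 ≤ R₁ → 1/2 ≤ R₂ → 1/2 ≤ R₃ →
      ({q : ℕ | 0 < q ∧ ∃ c : ℕ,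
          q = partB1 q * (partB2 q) ^ 2 * c ^ 2 * partD q ∧
          partD q ∣ c ∧
          R₀ < partB1 q ∧ (partB1 q : ℝ) ≤ 2 * R₀ ∧
          R₁ < partB2 q ∧ (partB2 q : ℝ) ≤ 2 * R₁ ∧
          R₂ < c ∧ (c : ℝ) ≤ 2 * R₂ ∧
          R₃ < partD q ∧ (partD q : ℝ) ≤ 2 * R₃}).ncard ≤
        C * R₀ * R₁ * R₂ ^ ((1 : ℝ)/2) * R₃ ^ ((1 : ℝ)/2) := by
  refine ⟨144, by norm_num, fun R₀ R₁ R₂ R₃ h₀ h₁ h₂ h₃ => ?_⟩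
  set T := Icc 1 ⌊2 * R₀⌋₊ ×ˢ Icc 1 ⌊2 * R₁⌋₊ ×ˢ admissiblePairs ⌊2 * R₂⌋₊ ⌊2 * R₃⌋₊
  calc (_ : ℝ) ≤ #T := by
        refine Nat.cast_le.2 ((Set.ncard_le_ncard ?_ (finite_toSet (T.image fun x =>
          x.1 * x.2.1 ^ 2 * x.2.2.1 ^ 2 * x.2.2.2))).trans
          ((Set.ncard_coe_finset _).trans_le card_image_le))
        rintro q ⟨hq0, c, hq, hdc, l₀, u₀, l₁, u₁, l₂, u₂, l₃, u₃⟩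
        refine mem_image.2 ⟨(partB1 q, partB2 q, c, partD q), ?_, hq.symm⟩
        simp only [T, admissiblePairs, mem_product, mem_filter]
        exact ⟨mem_Icc_one_floor (by linarith) l₀ u₀, mem_Icc_one_floor (by linarith) l₁ u₁,
          ⟨mem_Icc_one_floor (by linarith) l₂ u₂, mem_Icc_one_floor (by linarith) l₃ u₃⟩, hdc,
          fun p hp hpc hpd => sq_dvd_of_eq_partB1_mul hq0.ne' hq hp hpc hpd⟩
    _ = #(Icc 1 ⌊2 * R₀⌋₊) * (#(Icc 1 ⌊2 * R₁⌋₊) *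
          #(admissiblePairs ⌊2 * R₂⌋₊ ⌊2 * R₃⌋₊)) := by simp only [T, card_product, Nat.cast_mul]
    _ ≤ 2 * R₀ * (2 * R₁ * (18 * √(⌊2 * R₂⌋₊ : ℝ) * √(⌊2 * R₃⌋₊ : ℝ))) := by
        gcongr
        exacts [card_Icc_one_floor_le (by linarith), card_Icc_one_floor_le (by linarith),
          card_admissiblePairs_le _ _]
    _ ≤ 2 * R₀ * (2 * R₁ * (18 * √(2 * R₂) * √(2 * R₃))) := by
        gcongr <;> exact Nat.floor_le (by linarith)
    _ = 144 * R₀ * R₁ * R₂ ^ ((1 : ℝ)/2) * R₃ ^ ((1 : ℝ)/2) := by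
        rw [Real.sqrt_mul zero_le_two, Real.sqrt_mul zero_le_two, Real.sqrt_eq_rpow R₂,
          Real.sqrt_eq_rpow R₃]
        linear_combination (72 * R₀ * R₁ * R₂ ^ ((1 : ℝ)/2) * R₃ ^ ((1 : ℝ)/2)) *
          Real.mul_self_sqrt (zero_le_two : (0 : ℝ) ≤ 2)
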